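/- arXiv:2005.01987 — 2 statements merged into one kernel-verified Lean document; each statement's English description precedes it below -/
import Mathlib

section
/- If a (2n+1)-dimensional Kenmotsu manifold admits a conformal η-Einstein soliton with soliton vector field ξ, then its scalar curvature equals r = (p + 2/(2n+1)) - 4n + 2λ + 2μ. -/
/-- If a (2n+1)-dimensional Kenmotsu manifold admits a conformal
η-Einstein soliton with soliton vector field ξ, then the scalar curvature equals
r = (p + 2/(2n+1)) - 4n + 2λ + 2μ. -/
theorem conformal_eta_Einstein_soliton_Kenmotsu_scalar_curvature
    {V : Type*} [AddCommGroup V] [Module ℝ V]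
    (n : ℕ) (g S L : V → V → ℝ) (η : V → ℝ) (ξ : V)
    (lam mu r p : ℝ)
    (heta : η ξ = 1)
    (hgxi : ∀ X : V, g X ξ = η X)
    -- Kenmotsu Ricci identity S(X,ξ) = -2n η(X)
    (hSxi : ∀ X : V, S X ξ = -2 * (n : ℝ) * η X)
    -- Kenmotsu identity for the Lie derivative of g along ξ
    (hL : ∀ X Y : V, L X Y = 2 * (g X Y - η X * η Y))
    -- conformal η-Einstein soliton equation
    (hsol : ∀ X Y : V, L X Y + 2 * S X Y
        + (2 * lam - r + (p + 2 / (2 * (n : ℝ) + 1))) * g X Y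
        + 2 * mu * (η X * η Y) = 0) :
    r = (p + 2 / (2 * (n : ℝ) + 1)) - 4 * (n : ℝ) + 2 * lam + 2 * mu := by
  -- At (ξ, ξ) the Lie derivative term vanishes and S, g, η⊗η reduce to constants.
  have hsol_ξξ := hsol ξ ξ
  rw [hL ξ ξ, hgxi ξ, hSxi ξ, heta] at hsol_ξξ
  linear_combination -hsol_ξξ
end

section
/- If a (2n+1)-dimensional Kenmotsu manifold admits a conformal η-Einstein soliton with soliton vector field ξ and its Ricci tensor is η-recurrent, i.e. (∇_X S)(Y,Z) = η(X) S(Y,Z), then the scalar curvature equals r = 2λ + 2μ + (p + 2/(2n+1)). -/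
/-! Everything is read off at `X = Y = Z = ξ`. Since `g(ξ, ξ) = η(ξ) = 1`, the Kenmotsu identity
gives `(∇_ξ η) ξ = 0`, so the soliton formula for `∇S` makes `(∇_ξ S)(ξ, ξ)` vanish, and
η-recurrence turns this into `S(ξ, ξ) = 0`. The soliton equation at `(ξ, ξ)` then reduces to a
linear relation between `r`, `λ`, `μ` and `p`. -/

section ReebField

variable {V : Type*} {g : V → V → ℝ} {η : V → ℝ} {ξ : V}

theorem deta_reeb_reeb_eq_zero {Deta : V → V → ℝ} (heta : η ξ = 1)
    (hgxi : ∀ X : V, g X ξ = η X) (hDeta : ∀ X Y : V, Deta X Y = g X Y - η X * η Y) :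
    Deta ξ ξ = 0 := by
  rw [hDeta, hgxi, heta]
  norm_num

theorem ricci_reeb_reeb_eq_zero_of_recurrent {S Deta : V → V → ℝ} {DS : V → V → V → ℝ}
    {mu : ℝ} (heta : η ξ = 1) (hDeta_ξ : Deta ξ ξ = 0)
    (hDS : ∀ X Y Z : V, DS X Y Z = -(mu - 1) * (η Z * Deta X Y + η Y * Deta X Z))
    (hrec : ∀ X Y Z : V, DS X Y Z = η X * S Y Z) :
    S ξ ξ = 0 := by
  have h := (hrec ξ ξ ξ).symm.trans (hDS ξ ξ ξ)
  rw [hDeta_ξ, heta] at h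
  linarith

end ReebField

theorem eta_recurrent_Kenmotsu_conformal_eta_Einstein_soliton_general
    {V : Type*}
    (n : ℕ) (g S Deta : V → V → ℝ) (DS : V → V → V → ℝ) (η : V → ℝ) (ξ : V)
    (lam mu r p : ℝ)
    (heta : η ξ = 1)
    (hgxi : ∀ X : V, g X ξ = η X)
    -- Kenmotsu identity (∇_X η)Y = g(X,Y) - η(X)η(Y)
    (hDeta : ∀ X Y : V, Deta X Y = g X Y - η X * η Y)
    -- conformal η-Einstein soliton equation (with (£_ξ g)(X,Y) = 2[g(X,Y)-η(X)η(Y)])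
    (hsol : ∀ X Y : V, 2 * (g X Y - η X * η Y) + 2 * S X Y
        + (2 * lam - r + (p + 2 / (2 * (n : ℝ) + 1))) * g X Y
        + 2 * mu * (η X * η Y) = 0)
    -- derived formula for the covariant derivative of the Ricci tensor
    (hDS : ∀ X Y Z : V, DS X Y Z = -(mu - 1) * (η Z * Deta X Y + η Y * Deta X Z))
    -- η-recurrence of the Ricci tensor: ∇S = η ⊗ S
    (hrec : ∀ X Y Z : V, DS X Y Z = η X * S Y Z) :
    r = 2 * lam + 2 * mu + (p + 2 / (2 * (n : ℝ) + 1)) := by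
  have hS : S ξ ξ = 0 := ricci_reeb_reeb_eq_zero_of_recurrent heta
    (deta_reeb_reeb_eq_zero heta hgxi hDeta) hDS hrec
  have h := hsol ξ ξ
  rw [hgxi, heta, hS] at h
  linarith

/-- If a (2n+1)-dimensional Kenmotsu manifold admits a conformal
η-Einstein soliton with soliton vector field ξ and its Ricci tensor is
η-recurrent, i.e. (∇_X S)(Y,Z) = η(X) S(Y,Z), then r = 2λ + 2μ + (p + 2/(2n+1)). -/
theorem eta_recurrent_Kenmotsu_conformal_eta_Einstein_soliton
    {V : Type*} [AddCommGroup V] [Module ℝ V]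
    (n : ℕ) (g S Deta : V → V → ℝ) (DS : V → V → V → ℝ) (η : V → ℝ) (ξ : V)
    (lam mu r p : ℝ)
    (heta : η ξ = 1)
    (hgxi : ∀ X : V, g X ξ = η X)
    -- Kenmotsu identity (∇_X η)Y = g(X,Y) - η(X)η(Y)
    (hDeta : ∀ X Y : V, Deta X Y = g X Y - η X * η Y)
    -- conformal η-Einstein soliton equation (with (£_ξ g)(X,Y) = 2[g(X,Y)-η(X)η(Y)])
    (hsol : ∀ X Y : V, 2 * (g X Y - η X * η Y) + 2 * S X Y
        + (2 * lam - r + (p + 2 / (2 * (n : ℝ) + 1))) * g X Y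
        + 2 * mu * (η X * η Y) = 0)
    -- derived formula for the covariant derivative of the Ricci tensor
    (hDS : ∀ X Y Z : V, DS X Y Z = -(mu - 1) * (η Z * Deta X Y + η Y * Deta X Z))
    -- η-recurrence of the Ricci tensor: ∇S = η ⊗ S
    (hrec : ∀ X Y Z : V, DS X Y Z = η X * S Y Z) :
    r = 2 * lam + 2 * mu + (p + 2 / (2 * (n : ℝ) + 1)) :=
  eta_recurrent_Kenmotsu_conformal_eta_Einstein_soliton_general n g S Deta DS η ξ lam mu r p heta
    hgxi hDeta hsol hDS hrec
end
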